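/- Under the hypotheses of the forest lemma (finite rooted forest F with |V| < k for k ≥ 2, pairwise disjoint sets M(v) of positive naturals with |M(r)| = 1 for roots and |M(v)| = ∑_{j∈M(p)} k^j for v with parent p, M_0 = ⋃_v M(v), M_{i+1} = positive positions of nonzero base-k digits of |M_i|), one has: (a) M_{i+1} ⊆ M_i for every i; (b) |M_i| mod k equals the number of roots r of F with height(r) ≥ i; and (c) if every node of F has height ≤ i, then M_{i+1} = ∅. -/

import Mathlib

/-!
Write `cardExponents v` for `{0}` when `v` is a root and for `M p` when `p` is the parent of `v`,
so that `|M v| = ∑_{j ∈ cardExponents v} k ^ j` for every node. By disjointness the set of nodes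
of height `≥ i` then has `|⋃ M v| = ∑_j c_j k ^ j`, where `c_j` counts those nodes whose
`cardExponents` contain `j`. As `c_j ≤ |V| < k`, this is the base-`k` expansion: digit `0` counts
the roots of height `≥ i`, and for `j > 0` digit `j` is nonzero iff `j ∈ M p` for a node `p`
having a child of height `≥ i`, i.e. for a `p` of height `≥ i + 1`. By induction,
`M_i = ⋃_{ht v ≥ i} M v`, from which all three statements follow.
-/

open Finset

theorem Finset.sum_range_succ_mul_pow {R : Type*} [CommSemiring R] (w : ℕ → R) (k : R)
    (N : ℕ) :
    ∑ j ∈ range (N + 1), w j * k ^ j = w 0 + k * ∑ j ∈ range N, w (j + 1) * k ^ j := by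
  rw [sum_range_succ', mul_sum, add_comm]
  simp only [pow_succ, pow_zero, mul_one]
  exact congrArg _ (sum_congr rfl fun j _ => by ring)

namespace Nat

theorem sum_range_mul_pow_div_pow_mod {k : ℕ} {w : ℕ → ℕ} (hw : ∀ j, w j < k) (N t : ℕ) :
    (∑ j ∈ range N, w j * k ^ j) / k ^ t % k = if t < N then w t else 0 := by
  induction t generalizing w N with
  | zero =>
    cases N with
    | zero => simp
    | succ N => simp [sum_range_succ_mul_pow, Nat.mod_eq_of_lt (hw 0)]
  | succ t ih =>
    cases N with
    | zero => simp
    | succ N =>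
      have hk : 0 < k := Nat.zero_lt_of_lt (hw 0)
      rw [pow_succ', ← Nat.div_div_eq_div_mul, sum_range_succ_mul_pow,
        Nat.add_mul_div_left _ _ hk, Nat.div_eq_of_lt (hw 0), zero_add,
        ih (fun j => hw (j + 1))]
      simp

theorem sum_mul_pow_div_pow_mod {k : ℕ} {S : Finset ℕ} {w : ℕ → ℕ} (hw : ∀ j, w j < k)
    (hS : ∀ j ∉ S, w j = 0) (t : ℕ) :
    (∑ j ∈ S, w j * k ^ j) / k ^ t % k = w t := by
  obtain ⟨N, hN⟩ := S.exists_nat_subset_range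
  rw [sum_subset hN (fun j _ hj => by rw [hS j hj, zero_mul]), sum_range_mul_pow_div_pow_mod hw]
  split_ifs with ht
  · rfl
  · exact (hS t fun h => ht (mem_range.1 (hN h))).symm

end Nat

theorem Finset.sum_sum_eq_sum_card_filter_smul {ι α β : Type*} [DecidableEq α] [AddCommMonoid β]
    (s : Finset ι) (E : ι → Finset α) (f : α → β) :
    ∑ v ∈ s, ∑ j ∈ E v, f j = ∑ j ∈ s.biUnion E, #{v ∈ s | j ∈ E v} • f j := by
  rw [sum_comm' (t' := s.biUnion E) (s' := fun j => {v ∈ s | j ∈ E v})]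
  · simp only [sum_const]
  · intro v j
    simp only [mem_filter, mem_biUnion]
    constructor
    · rintro ⟨hv, hj⟩; exact ⟨⟨hv, hj⟩, v, hv, hj⟩
    · rintro ⟨⟨hv, hj⟩, -⟩; exact ⟨hv, hj⟩

section Forest

variable {V : Type*} {parent : V → Option V} {M : V → Finset ℕ}

variable (parent M) in
def cardExponents (v : V) : Finset ℕ :=
  (parent v).elim {0} M

theorem card_eq_sum_pow_cardExponents {k : ℕ}
    (hroot : ∀ r, parent r = none → (M r).card = 1)
    (hchild : ∀ v p, parent v = some p → (M v).card = ∑ j ∈ M p, k ^ j) (v : V) :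
    (M v).card = ∑ j ∈ cardExponents parent M v, k ^ j := by
  cases h : parent v with
  | none => simp [cardExponents, h, hroot v h]
  | some p => simp [cardExponents, h, hchild v p h]

theorem zero_mem_cardExponents_iff (hpos : ∀ v, ∀ j ∈ M v, 0 < j) (v : V) :
    0 ∈ cardExponents parent M v ↔ parent v = none := by
  cases h : parent v with
  | none => simp [cardExponents, h]
  | some p => simpa [cardExponents, h] using fun h0 => (hpos p 0 h0).false

theorem mem_cardExponents_of_pos {j : ℕ} (hj : 0 < j) (v : V) :
    j ∈ cardExponents parent M v ↔ ∃ p, parent v = some p ∧ j ∈ M p := by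
  cases h : parent v with
  | none => simp [cardExponents, h, hj.ne']
  | some p => simp [cardExponents, h]

variable [Fintype V]

theorem card_biUnion_div_pow_mod {k : ℕ} (hcard : Fintype.card V < k)
    (hdisj : ∀ v w, v ≠ w → Disjoint (M v) (M w))
    (hroot : ∀ r, parent r = none → (M r).card = 1)
    (hchild : ∀ v p, parent v = some p → (M v).card = ∑ j ∈ M p, k ^ j) (s : Finset V) (t : ℕ) :
    (s.biUnion M).card / k ^ t % k = #{v ∈ s | t ∈ cardExponents parent M v} := by
  rw [card_biUnion fun v _ w _ hvw => hdisj v w hvw,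
    sum_congr rfl fun v _ => card_eq_sum_pow_cardExponents hroot hchild v,
    sum_sum_eq_sum_card_filter_smul]
  refine Nat.sum_mul_pow_div_pow_mod (fun j => (card_le_univ _).trans_lt hcard) (fun j hj => ?_) t
  simp only [card_eq_zero, filter_eq_empty_iff]
  exact fun v hv hjv => hj (mem_biUnion.2 ⟨v, hv, hjv⟩)

variable [DecidableEq V]

theorem exists_child_le_iff_add_one_le {ht : V → ℕ}
    (hht : ∀ v, ht v =
      (Finset.univ.filter (fun w => parent w = some v)).sup (fun w => ht w + 1))
    (p : V) (i : ℕ) : (∃ v, parent v = some p ∧ i ≤ ht v) ↔ i + 1 ≤ ht p := by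
  rw [hht p, Finset.le_sup_iff (Nat.succ_pos i)]
  simp

theorem Mi_eq_biUnion_le_ht {k : ℕ} {ht : V → ℕ}
    (hht : ∀ v, ht v =
      (Finset.univ.filter (fun w => parent w = some v)).sup (fun w => ht w + 1))
    (hcard : Fintype.card V < k)
    (hpos : ∀ v, ∀ j ∈ M v, 0 < j)
    (hdisj : ∀ v w, v ≠ w → Disjoint (M v) (M w))
    (hroot : ∀ r, parent r = none → (M r).card = 1)
    (hchild : ∀ v p, parent v = some p → (M v).card = ∑ j ∈ M p, k ^ j)
    {Mi : ℕ → Finset ℕ}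
    (hM0 : Mi 0 = Finset.univ.biUnion M)
    (hMi : ∀ i j, j ∈ Mi (i + 1) ↔ 0 < j ∧ (Mi i).card / k ^ j % k ≠ 0) (i : ℕ) :
    Mi i = ({v | i ≤ ht v} : Finset V).biUnion M := by
  induction i with
  | zero => simpa using hM0
  | succ i ih =>
    ext j
    rw [hMi, ih, card_biUnion_div_pow_mod hcard hdisj hroot hchild, mem_biUnion]
    rcases j.eq_zero_or_pos with rfl | hj
    · simpa using fun p _ h0 => (hpos p 0 h0).false
    · simp only [hj, true_and, ne_eq, card_eq_zero, filter_eq_empty_iff, not_forall, not_not,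
        mem_cardExponents_of_pos hj, mem_filter, mem_univ, ← exists_child_le_iff_add_one_le hht]
      constructor
      · rintro ⟨v, hv, p, hvp, hjp⟩
        exact ⟨p, ⟨v, hvp, hv⟩, hjp⟩
      · rintro ⟨p, ⟨v, hvp, hv⟩, hjp⟩
        exact ⟨v, hv, p, hvp, hjp⟩

end Forest

theorem forest_Mi_corollaries_general (k : ℕ) (V : Type) [Fintype V] [DecidableEq V]
    (parent : V → Option V) (ht : V → ℕ)
    (hht : ∀ v, ht v =
      (Finset.univ.filter (fun w => parent w = some v)).sup (fun w => ht w + 1))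
    (hcard : Fintype.card V < k)
    (M : V → Finset ℕ)
    (hpos : ∀ v, ∀ j ∈ M v, 0 < j)
    (hdisj : ∀ v w, v ≠ w → Disjoint (M v) (M w))
    (hroot : ∀ r, parent r = none → (M r).card = 1)
    (hchild : ∀ v p, parent v = some p → (M v).card = ∑ j ∈ M p, k ^ j)
    (Mi : ℕ → Finset ℕ)
    (hM0 : Mi 0 = Finset.univ.biUnion M)
    (hMi : ∀ i j, j ∈ Mi (i + 1) ↔ 0 < j ∧ (Mi i).card / k ^ j % k ≠ 0) :
    (∀ i, Mi (i + 1) ⊆ Mi i) ∧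
    (∀ i, (Mi i).card % k =
      (Finset.univ.filter (fun r => parent r = none ∧ i ≤ ht r)).card) ∧
    (∀ i, (∀ v, ht v ≤ i) → Mi (i + 1) = ∅) := by
  have hMi_eq := Mi_eq_biUnion_le_ht hht hcard hpos hdisj hroot hchild hM0 hMi
  refine ⟨fun i => ?_, fun i => ?_, fun i hi => ?_⟩
  · rw [hMi_eq, hMi_eq]
    exact biUnion_subset_biUnion_of_subset_left M
      (monotone_filter_right _ fun v _ h => Nat.le_of_succ_le h)
  · have hdigit := card_biUnion_div_pow_mod hcard hdisj hroot hchild {v | i ≤ ht v} 0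
    rw [pow_zero, Nat.div_one, ← hMi_eq] at hdigit
    rw [hdigit, filter_filter]
    simp only [zero_mem_cardExponents_iff hpos, and_comm]
  · rw [hMi_eq, filter_false_of_mem fun v _ => not_le.2 (Nat.lt_succ_of_le (hi v)),
      biUnion_empty]

/-- Corollaries of the forest lemma: under the hypotheses modelling a
`k`-injective pseudo-experiment on a finite rooted forest, the sets `M_i` are
decreasing, `|M_i| mod k` counts the roots of height `≥ i`, and the recursion
terminates at the depth of the forest. -/
theorem forest_Mi_corollaries (k : ℕ) (hk : 2 ≤ k) (V : Type) [Fintype V] [DecidableEq V]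
    (parent : V → Option V) (ht : V → ℕ)
    (hht : ∀ v, ht v =
      (Finset.univ.filter (fun w => parent w = some v)).sup (fun w => ht w + 1))
    (hcard : Fintype.card V < k)
    (M : V → Finset ℕ)
    (hpos : ∀ v, ∀ j ∈ M v, 0 < j)
    (hdisj : ∀ v w, v ≠ w → Disjoint (M v) (M w))
    (hroot : ∀ r, parent r = none → (M r).card = 1)
    (hchild : ∀ v p, parent v = some p → (M v).card = ∑ j ∈ M p, k ^ j)
    (Mi : ℕ → Finset ℕ)
    (hM0 : Mi 0 = Finset.univ.biUnion M)
    (hMi : ∀ i j, j ∈ Mi (i + 1) ↔ 0 < j ∧ (Mi i).card / k ^ j % k ≠ 0) :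
    (∀ i, Mi (i + 1) ⊆ Mi i) ∧
    (∀ i, (Mi i).card % k =
      (Finset.univ.filter (fun r => parent r = none ∧ i ≤ ht r)).card) ∧
    (∀ i, (∀ v, ht v ≤ i) → Mi (i + 1) = ∅) :=
  forest_Mi_corollaries_general k V parent ht hht hcard M hpos hdisj hroot hchild Mi hM0 hMi
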